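/- arXiv:math/0307387 — 4 statements merged into one kernel-verified Lean document; each statement's English description precedes it below -/
import Mathlib

section
/- Let R be a commutative ring and F : Mod(R) ≌ Mod(R) an R-linear equivalence of categories. Set M = F(R). Then M is an invertible R-module, i.e., there exists an R-module N with an R-linear isomorphism M ⊗_R N ≅ R, and there is a family of R-linear isomorphisms F(P) ≅ M ⊗_R P natural in P ∈ Mod(R). -/
/-! For an `R`-linear right adjoint `G` of `F`, the adjunction gives natural `R`-linear
isomorphisms `Hom(F R, P) ≅ Hom(R, G P) ≅ G P`, so `G` is the internal hom out of `M = F R`.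
Since `M ⊗ -` is also left adjoint to that internal hom, uniqueness of adjoints gives
`F ≅ M ⊗ -`. When `F` is an equivalence with inverse `G`, this yields
`M ⊗ G R ≅ F (G R) ≅ R`. -/

open CategoryTheory TensorProduct MonoidalCategory

noncomputable section

universe u v₁ v₂ u₁ u₂ w

namespace CategoryTheory.Adjunction

variable {R : Type w} [Semiring R] {C : Type u₁} {D : Type u₂} [Category.{v₁} C] [Category.{v₂} D]
  [Preadditive C] [Preadditive D] [Linear R C] [Linear R D] {F : C ⥤ D} {G : D ⥤ C}

def homLinearEquiv (adj : F ⊣ G) [G.Additive] [G.Linear R] (X : C) (Y : D) :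
    (F.obj X ⟶ Y) ≃ₗ[R] (X ⟶ G.obj Y) where
  __ := adj.homEquiv X Y
  map_add' f g := by simp [homEquiv_unit]
  map_smul' r f := by simp [homEquiv_unit]

end CategoryTheory.Adjunction

namespace ModuleCat

variable {R : Type u} [CommRing R] {F G : ModuleCat.{u} R ⥤ ModuleCat.{u} R} (adj : F ⊣ G)
  [G.Linear R]

def ihomIsoOfAdjunction : ihom (F.obj (ModuleCat.of R R)) ≅ G :=
  haveI := adj.isRightAdjoint
  haveI : G.Additive := Functor.additive_of_preserves_binary_products G
  NatIso.ofComponents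
    (fun P => (adj.homLinearEquiv (ModuleCat.of R R) P ≪≫ₗ ModuleCat.homLinearEquiv ≪≫ₗ
      LinearMap.ringLmapEquivSelf R R (G.obj P)).toModuleIso)
    (fun f => by
      ext (g : F.obj (ModuleCat.of R R) ⟶ _)
      change (adj.homEquiv _ _ (g ≫ f)).hom 1 = (G.map f).hom ((adj.homEquiv _ _ g).hom 1)
      rw [adj.homEquiv_naturality_right]
      rfl)

def leftAdjointIsoTensorLeft : F ≅ tensorLeft (F.obj (ModuleCat.of R R)) :=
  adj.leftAdjointUniq ((ihom.adjunction _).ofNatIsoRight (ihomIsoOfAdjunction adj))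

end ModuleCat

theorem statement4_general (R : Type) [CommRing R] (F : ModuleCat R ≌ ModuleCat R)
    [F.functor.Linear R] :
    (∃ N : ModuleCat R,
      Nonempty (TensorProduct R ↥(F.functor.obj (ModuleCat.of R R)) ↥N ≃ₗ[R] R)) ∧
    Nonempty (F.functor ≅ tensorLeft (F.functor.obj (ModuleCat.of R R))) := by
  have e := ModuleCat.leftAdjointIsoTensorLeft F.toAdjunction
  refine ⟨⟨ModuleCat.of R (ULift (F.inverse.obj (ModuleCat.of R R))), ⟨?_⟩⟩, ⟨e⟩⟩
  -- The statement's `N` lives in an arbitrary universe, hence the `ULift`.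
  exact (TensorProduct.congr (LinearEquiv.refl R _) ULift.moduleEquiv) ≪≫ₗ
    (e.symm.app _ ≪≫ F.counitIso.app (ModuleCat.of R R)).toLinearEquiv

/-- If `F : ModuleCat R ≌ ModuleCat R` is an `R`-linear self-equivalence and
`M = F(R)`, then `M` is an invertible `R`-module and there is a family of `R`-linear
isomorphisms `F(P) ≅ M ⊗[R] P` natural in `P` (i.e. a natural isomorphism between `F`
and the functor `M ⊗[R] (-)`). -/
theorem statement4 (R : Type) [CommRing R] (F : ModuleCat R ≌ ModuleCat R)
    [F.functor.Additive] [F.functor.Linear R] :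
    (∃ N : ModuleCat R,
      Nonempty (TensorProduct R ↥(F.functor.obj (ModuleCat.of R R)) ↥N ≃ₗ[R] R)) ∧
    Nonempty (F.functor ≅ tensorLeft (F.functor.obj (ModuleCat.of R R))) :=
  statement4_general R F

end
end

section
/- Let R be a commutative ring and M an R-module. The functor M ⊗_R (−) : Mod(R) → Mod(R) is an equivalence of categories if and only if M is invertible, i.e., if and only if there exists an R-module N with an R-linear isomorphism M ⊗_R N ≅ R. -/
/-!
If `M ⊗ N ≅ R` then also `N ⊗ M ≅ R` by symmetry, and associativity makes `N ⊗ (-)` a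
quasi-inverse of `M ⊗ (-)`. Conversely, if `F = M ⊗ (-)` is an equivalence, the counit at `R`
gives `M ⊗ F⁻¹(R) ≅ R`.
-/

open CategoryTheory TensorProduct MonoidalCategory

noncomputable section

namespace CategoryTheory.MonoidalCategory

variable {C : Type*} [Category C] [MonoidalCategory C]

def tensorLeftEquivalence {X Y : C} (i : X ⊗ Y ≅ 𝟙_ C) (j : Y ⊗ X ≅ 𝟙_ C) : C ≌ C :=
  Equivalence.mk (tensorLeft X) (tensorLeft Y)
    ((leftUnitorNatIso C).symm ≪≫ (tensoringLeft C).mapIso j.symm ≪≫ tensorLeftTensor Y X)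
    ((tensorLeftTensor X Y).symm ≪≫ (tensoringLeft C).mapIso i ≪≫ leftUnitorNatIso C)

theorem isEquivalence_tensorLeft_of_tensor_iso_unit [BraidedCategory C] {X Y : C}
    (i : X ⊗ Y ≅ 𝟙_ C) : (tensorLeft X).IsEquivalence :=
  (tensorLeftEquivalence i (β_ Y X ≪≫ i)).isEquivalence_functor

def tensorInvObjUnitIso (X : C) [(tensorLeft X).IsEquivalence] :
    X ⊗ (tensorLeft X).inv.obj (𝟙_ C) ≅ 𝟙_ C :=
  (tensorLeft X).asEquivalence.counitIso.app _

end CategoryTheory.MonoidalCategory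

/-- For an `R`-module `M`, the functor `M ⊗[R] (-) : ModuleCat R ⥤ ModuleCat R` is an
equivalence of categories if and only if `M` is invertible, i.e. there is an `R`-module
`N` with `M ⊗[R] N ≅ R`. -/
theorem statement5 (R : Type) [CommRing R] (M : Type) [AddCommGroup M] [Module R M] :
    (tensorLeft (ModuleCat.of R M)).IsEquivalence ↔
      ∃ N : ModuleCat R, Nonempty (TensorProduct R M ↥N ≃ₗ[R] R) := by
  constructor
  · intro _
    let e := (tensorInvObjUnitIso (ModuleCat.of R M)).toLinearEquiv
    exact ⟨ModuleCat.of R (ULift _), ⟨(ULift.moduleEquiv.lTensor M).trans e⟩⟩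
  · rintro ⟨N, ⟨e⟩⟩
    -- `N` lives in an arbitrary universe; being invertible it is finite, hence can be shrunk.
    have := Module.Invertible.right e
    have : Small.{0} N := Module.Finite.small R N
    exact isEquivalence_tensorLeft_of_tensor_iso_unit (Y := ModuleCat.of R (Shrink.{0} N))
      (((Shrink.linearEquiv R N).lTensor M).trans e).toModuleIso

end
end

section
/- Let R be a commutative local ring and M an invertible R-module, i.e., assume there exists an R-module N with an R-linear isomorphism M ⊗_R N ≅ R. Then M is isomorphic to R as an R-module (M is free of rank one). -/
open TensorProduct

noncomputable section

/-- An invertible module over a commutative local ring is free of rank one. -/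
theorem statement8 (R M : Type) [CommRing R] [IsLocalRing R] [AddCommGroup M] [Module R M]
    (N : Type) [AddCommGroup N] [Module R N]
    (h : Nonempty (TensorProduct R M N ≃ₗ[R] R)) :
    Nonempty (M ≃ₗ[R] R) := by
  obtain ⟨e⟩ := h
  have : Module.Invertible R M := .left e
  -- `Module.Free R M` is inferred from the triviality of `Pic R` for a local ring `R`.
  exact Module.Invertible.free_iff_linearEquiv.mp inferInstance

end
end

section
/- Let R be a commutative local ring and A an Azumaya R-algebra. Then every R-algebra automorphism of A is inner: for every R-algebra automorphism σ : A ≅ A there exists a unit u of A such that σ(a) = u a u⁻¹ for all a ∈ A. -/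
/-!
Under `A ⊗[R] Aᵐᵒᵖ ≃ End_R(A)`, the automorphism `σ ⊗ id` becomes an automorphism of `End_R(A)`.
Over a local ring every such automorphism is conjugation by a linear automorphism `T` of `A`:
the argument over a field goes through once a nonzero idempotent `E` of `End_R(A)` has some `E z`
with a functional `d` such that `d (E z) = 1`, and Nakayama provides `E z ∉ 𝔪 • A`.
Since `σ ⊗ id` fixes `1 ⊗ Aᵐᵒᵖ`, `T` commutes with right multiplications, so `T` is left
multiplication by the unit `u = T 1`; comparing on `a ⊗ 1` gives `σ a * u = u * a`.
-/

open TensorProduct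

noncomputable section

/-- The canonical `R`-linear map `A ⊗[R] Aᵐᵒᵖ →ₗ[R] End_R(A)`, `a ⊗ b ↦ (x ↦ a * x * b)`. -/
noncomputable def azumayaMulLeftRight (R A : Type) [CommRing R] [Ring A] [Algebra R A] :
    TensorProduct R A Aᵐᵒᵖ →ₗ[R] Module.End R A :=
  TensorProduct.lift <|
    LinearMap.mk₂ R (fun a b => LinearMap.mulLeftRight R (a, b.unop))
      (fun a a' b => LinearMap.ext fun x => by
        simp [LinearMap.add_apply, add_mul])
      (fun r a b => LinearMap.ext fun x => by
        simp [LinearMap.smul_apply, smul_mul_assoc])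
      (fun a b b' => LinearMap.ext fun x => by
        simp [LinearMap.add_apply, mul_add])
      (fun r a b => LinearMap.ext fun x => by
        simp [LinearMap.smul_apply, mul_smul_comm])

/-- An Azumaya `R`-algebra: an `R`-algebra which is faithful, finitely generated and
projective as an `R`-module, and such that the natural map `A ⊗[R] Aᵐᵒᵖ → End_R(A)`,
`a ⊗ b ↦ (x ↦ a * x * b)`, is bijective. -/
def IsAzumaya' (R A : Type) [CommRing R] [Ring A] [Algebra R A] : Prop :=
  Module.annihilator R A = ⊥ ∧ Module.Finite R A ∧ Module.Projective R A ∧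
    Function.Bijective (azumayaMulLeftRight R A)

open Module IsLocalRing

section
variable {R M : Type*} [CommRing R] [IsLocalRing R] [AddCommGroup M] [Module R M]

theorem Module.Projective.exists_dual_eq_one_of_notMem_maximalIdeal_smul_top
    [Module.Projective R M] {x : M} (hx : x ∉ maximalIdeal R • (⊤ : Submodule R M)) :
    ∃ d : Dual R M, d x = 1 := by
  obtain ⟨s, hs⟩ := Module.projective_def'.mp ‹Module.Projective R M›
  have hsum : Finsupp.linearCombination R id (s x) = x := congr($hs x)
  obtain ⟨y, hy⟩ : ∃ y, IsUnit (s x y) := by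
    by_contra! h
    refine hx ?_
    rw [← hsum, Finsupp.linearCombination_apply]
    exact Submodule.sum_mem _ fun y _ =>
      Submodule.smul_mem_smul ((mem_maximalIdeal _).mpr (h y)) Submodule.mem_top
  refine ⟨(hy.unit⁻¹ : Rˣ) • (Finsupp.lapply y ∘ₗ s), ?_⟩
  simp [Units.smul_def]

theorem IsIdempotentElem.exists_apply_notMem_maximalIdeal_smul_top [Module.Finite R M]
    {E : Module.End R M} (hE : IsIdempotentElem E) (hE0 : E ≠ 0) :
    ∃ z, E z ∉ maximalIdeal R • (⊤ : Submodule R M) := by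
  by_contra! h
  have hle : LinearMap.range E ≤ maximalIdeal R • LinearMap.range E :=
    calc LinearMap.range E = (LinearMap.range E).map E := by
          rw [← LinearMap.range_comp, ← Module.End.mul_eq_comp, hE.eq]
      _ ≤ (maximalIdeal R • ⊤ : Submodule R M).map E :=
          Submodule.map_mono fun _ ⟨z, hz⟩ => hz ▸ h z
      _ = maximalIdeal R • LinearMap.range E := by
          rw [Submodule.map_smul'', Submodule.map_top]
  exact hE0 <| LinearMap.range_eq_bot.mp <| Submodule.eq_bot_of_le_smul_of_le_jacobson_bot _ _
    (LinearMap.range_eq_map E ▸ Module.Finite.fg_top.map E) hle (maximalIdeal_le_jacobson ⊥)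

theorem IsIdempotentElem.exists_dual_apply_eq_one [Module.Finite R M] [Module.Projective R M]
    {E : Module.End R M} (hE : IsIdempotentElem E) (hE0 : E ≠ 0) :
    ∃ z, ∃ d : Dual R M, d (E z) = 1 := by
  obtain ⟨z, hz⟩ := hE.exists_apply_notMem_maximalIdeal_smul_top hE0
  exact ⟨z, Module.Projective.exists_dual_eq_one_of_notMem_maximalIdeal_smul_top hz⟩

end

section
open LinearMap
variable {R V W : Type*} [CommRing R] [IsLocalRing R]
  [AddCommGroup V] [Module R V] [Module.Finite R V] [Module.Projective R V]
  [AddCommGroup W] [Module R W] [Module.Finite R W] [Module.Projective R W]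

/-- The proof of `AlgEquiv.eq_linearEquivConjAlgEquiv`, with the functionals taking the value `1`
supplied by `IsIdempotentElem.exists_dual_apply_eq_one`. -/
theorem AlgEquiv.eq_linearEquivConjAlgEquiv_of_isLocalRing (f : End R V ≃ₐ[R] End R W) :
    ∃ T : V ≃ₗ[R] W, f = T.conjAlgEquiv R := by
  by_cases! hV : Subsingleton V
  · nontriviality W
    simpa using congr(f $(Subsingleton.allEq 0 1))
  simp_rw [AlgEquiv.ext_iff, LinearEquiv.conjAlgEquiv_apply, ← comp_assoc,
    LinearEquiv.eq_comp_toLinearMap_symm]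
  obtain ⟨u, v, huv⟩ := IsIdempotentElem.one.exists_dual_apply_eq_one (one_ne_zero (α := End R V))
  rw [End.one_apply] at huv
  have hP : IsIdempotentElem (smulRight v u) := by
    ext x; simp [huv]
  have hP0 : smulRight v u ≠ 0 := fun h => by
    simpa [huv] using congr(v ($h u))
  obtain ⟨z, d, hd⟩ := (hP.map f).exists_dual_apply_eq_one (by simpa using hP0)
  set T := applyₗ z ∘ₗ f.toLinearMap ∘ₗ smulRightₗ v
  have hT x : T x = f (smulRight v x) z := rfl
  have hTmap A x : T (A x) = f A (T x) := by
    simp only [hT, ← End.mul_apply, ← map_mul]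
    congr; ext; simp
  have surj : Function.Surjective T := fun w ↦
    ⟨f.symm (smulRight d w) u, by simp [hTmap, hT, hd]⟩
  have inj : Function.Injective T := fun x y hxy ↦ by
    have h_smul : smulRightₗ v x = smulRightₗ v y := by
      apply f.injective <| LinearMap.ext fun z ↦ ?_
      obtain ⟨w, rfl⟩ := surj z
      simp_rw [← hTmap, smulRightₗ_apply_apply, _root_.map_smul, hxy]
    simpa [huv] using congr((fun f ↦ f u) $h_smul)
  exact ⟨.ofBijective T ⟨inj, surj⟩, fun A ↦ (LinearMap.ext <| hTmap A).symm⟩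

end

theorem Equiv.exists_unit_apply_eq_mul_of_map_mul {A : Type*} [Monoid A] (T : A ≃ A)
    (hT : ∀ y c, T (y * c) = T y * c) : ∃ u : Aˣ, ∀ y, T y = u * y := by
  have hmul y : T y = T 1 * y := by rw [← hT, one_mul]
  have hinv : T 1 * T.symm 1 = 1 := by rw [← hmul, T.apply_symm_apply]
  have hinv' : T.symm 1 * T 1 = 1 := T.injective <| by rw [hT, T.apply_symm_apply, one_mul]
  exact ⟨⟨T 1, T.symm 1, hinv, hinv'⟩, hmul⟩

section Azumaya
variable {R A : Type} [CommRing R] [Ring A] [Algebra R A]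

theorem azumayaMulLeftRight_eq : azumayaMulLeftRight R A = (AlgHom.mulLeftRight R A).toLinearMap :=
  TensorProduct.ext' fun a b => LinearMap.ext fun x => by simp [azumayaMulLeftRight]

theorem IsAzumaya'.bijective_mulLeftRight (hA : IsAzumaya' R A) :
    Function.Bijective (AlgHom.mulLeftRight R A) := by
  simpa [azumayaMulLeftRight_eq] using hA.2.2.2

end Azumaya

/-- **Skolem–Noether.** Every algebra automorphism of an Azumaya algebra over a
commutative local ring is inner. -/
theorem statement9 (R A : Type) [CommRing R] [IsLocalRing R] [Ring A] [Algebra R A]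
    (hA : IsAzumaya' R A) (σ : A ≃ₐ[R] A) :
    ∃ u : Aˣ, ∀ a : A, σ a = ↑u * a * ↑u⁻¹ := by
  have hbij := hA.bijective_mulLeftRight
  obtain ⟨-, _, _, -⟩ := hA
  let ψ := AlgEquiv.ofBijective (AlgHom.mulLeftRight R A) hbij
  let τ := Algebra.TensorProduct.congr σ (AlgEquiv.refl : Aᵐᵒᵖ ≃ₐ[R] Aᵐᵒᵖ)
  obtain ⟨T, hT⟩ := ((ψ.symm.trans τ).trans ψ).eq_linearEquivConjAlgEquiv_of_isLocalRing
  have hψ t y : ψ (τ t) (T y) = T (ψ t y) := by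
    simpa using congr($hT (ψ t) (T y))
  have hleft a y : σ a * T y = T (a * y) := by simpa [ψ, τ] using hψ (a ⊗ₜ 1) y
  have hright y c : T y * c = T (y * c) := by simpa [ψ, τ] using hψ (1 ⊗ₜ .op c) y
  obtain ⟨u, hu⟩ := T.toEquiv.exists_unit_apply_eq_mul_of_map_mul fun y c => (hright y c).symm
  simp only [LinearEquiv.coe_toEquiv] at hu
  refine ⟨u, fun a => ?_⟩
  have hconj : σ a * u = u * a := by simpa [hu] using hleft a 1
  rw [← hconj, Units.mul_inv_cancel_right]

end
end
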